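/- Let f : T → T be a continuous map of a tree and let A be a subcontinuum of T containing a fixed point x of f. Then the set-theoretic limit superior Ls(f, A) = ⋂_{m≥0} ⋃_{n≥m} f^n(A) is a connected subset of T containing x and is strongly invariant: f(Ls(f,A)) = Ls(f,A). -/

import Mathlib

open Set Filter Metric Topology TopologicalSpace

/-- An arc: a subset homeomorphic to `[0,1]`. -/
def IsArc {T : Type*} [TopologicalSpace T] (A : Set T) : Prop :=
  Nonempty (↥(Set.Icc (0:ℝ) 1) ≃ₜ ↥A)

/-- An arc with endpoints `x` and `y`. -/
def IsArcBetween {T : Type*} [TopologicalSpace T] (A : Set T) (x y : T) : Prop :=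
  ∃ e : ↥(Set.Icc (0:ℝ) 1) ≃ₜ ↥A,
    ((e ⟨0, by norm_num⟩ : ↥A) : T) = x ∧ ((e ⟨1, by norm_num⟩ : ↥A) : T) = y

/-- A tree: a continuum which is uniquely arcwise connected and is a point or a
union of finitely many arcs. -/
structure IsTreeSpace (T : Type*) [MetricSpace T] : Prop where
  compact : CompactSpace T
  conn : ConnectedSpace T
  uniqueArc : ∀ x y : T, x ≠ y → ∃! A : Set T, IsArcBetween A x y
  finiteArcs : (∃ x : T, (Set.univ : Set T) = {x}) ∨
    ∃ s : Finset (Set T), (∀ A ∈ s, IsArc A) ∧ ⋃₀ (s : Set (Set T)) = Set.univ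

/-- The unique arc from `x` to `y` in a tree. -/
noncomputable def treeArc {T : Type*} [MetricSpace T] (hT : IsTreeSpace T) (x y : T) :
    Set T := by
  classical exact if h : x = y then {x} else (hT.uniqueArc x y h).choose

/-- `Comp B x` : the connected component of `x` in `B` if `x ∈ B`, else `{x}`. -/
noncomputable def Comp {T : Type*} [TopologicalSpace T] (B : Set T) (x : T) : Set T := by
  classical exact if x ∈ B then connectedComponentIn B x else {x}

/-- `x` is an endpoint of the whole space (valence one). -/
def IsEnd {T : Type*} [TopologicalSpace T] (x : T) : Prop :=
  IsConnected ({x}ᶜ : Set T)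

/-- `x` is a cut-point of the whole space (valence at least two). -/
def IsCut {T : Type*} [TopologicalSpace T] (x : T) : Prop :=
  ¬ IsPreconnected ({x}ᶜ : Set T)

/-- `x` is an endpoint of the subspace `S` (valence one in `S`). -/
def IsEndpointOf {T : Type*} [TopologicalSpace T] (S : Set T) (x : T) : Prop :=
  x ∈ S ∧ IsConnected (S \ {x})

/-- A subcontinuum: a nonempty compact connected subset. -/
def IsSubcontinuum {T : Type*} [TopologicalSpace T] (A : Set T) : Prop :=
  A.Nonempty ∧ IsCompact A ∧ IsConnected A

/-- Attracting fixed point. -/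
def IsAFP {T : Type*} [TopologicalSpace T] (f : T → T) (x : T) : Prop :=
  f x = x ∧ ∀ U : Set T, IsOpen U → x ∈ U →
    ∃ V : Set T, IsOpen V ∧ x ∈ V ∧ V ⊆ U ∧ f '' closure V ⊆ V

/-- `A` is asymptotically periodic under `f`: for some `p ≥ 1` the sequence
`f^{pn}(A)` converges in the Hausdorff metric (to a nonempty compact set). -/
def AsympPeriodic {T : Type*} [MetricSpace T] (f : T → T) (A : Set T) : Prop :=
  ∃ p : ℕ, 1 ≤ p ∧ ∃ L : Set T, L.Nonempty ∧ IsCompact L ∧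
    Tendsto (fun n : ℕ => hausdorffDist (f^[p * n] '' A) L) atTop (𝓝 0)

/-- Kuratowski lower limit of a sequence of sets. -/
def KLiminf {T : Type*} [TopologicalSpace T] (A : ℕ → Set T) : Set T :=
  {x | ∀ U : Set T, IsOpen U → x ∈ U → ∀ᶠ n in atTop, (U ∩ A n).Nonempty}

/-- Kuratowski upper limit of a sequence of sets. -/
def KLimsup {T : Type*} [TopologicalSpace T] (A : ℕ → Set T) : Set T :=
  {x | ∀ U : Set T, IsOpen U → x ∈ U → ∃ᶠ n in atTop, (U ∩ A n).Nonempty}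

/-- Convergence in the hyperspace: the Kuratowski lower and upper limits agree. -/
def KConv {T : Type*} [TopologicalSpace T] (A : ℕ → Set T) : Prop :=
  KLiminf A = KLimsup A

/-- Set-theoretic limit superior of the iterated images of `A`. -/
def Ls {T : Type*} (f : T → T) (A : Set T) : Set T :=
  ⋂ m : ℕ, ⋃ n : ℕ, ⋃ (_ : m ≤ n), f^[n] '' A

/-- The hyperspace of subcontinua of `T`, with the Hausdorff metric. -/
abbrev SubCon (T : Type*) [MetricSpace T] :=
  {A : NonemptyCompacts T // IsConnected (A.1 : Set T)}

/-- The induced map on the hyperspace of subcontinua. -/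
noncomputable def indCon {T : Type*} [MetricSpace T] (f : T → T) (hf : Continuous f) :
    SubCon T → SubCon T :=
  fun A => ⟨⟨⟨f '' (A.1 : Set T), A.1.isCompact.image hf⟩, A.1.nonempty.image f⟩,
    A.2.image f hf.continuousOn⟩

/-- Topological entropy (Bowen–Dinaburg) of `f` on the subset `S`. -/
noncomputable def entropyOn {X : Type*} [MetricSpace X] (f : X → X) (S : Set X) : EReal :=
  Dynamics.coverEntropy f S

/-- Topological entropy of `f`. -/
noncomputable def entropy {X : Type*} [MetricSpace X] (f : X → X) : EReal :=
  Dynamics.coverEntropy f Set.univ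

/-- Maximal cardinality of an `(n,f,ε)`-separated subset of `S`. -/
noncomputable def sepNumOn {X : Type*} [MetricSpace X] (f : X → X) (S : Set X)
    (n : ℕ) (ε : ℝ) : ℕ :=
  sSup {k : ℕ | ∃ E : Finset X, ↑E ⊆ S ∧
    (∀ x ∈ E, ∀ y ∈ E, x ≠ y → ∃ j < n, ε < dist (f^[j] x) (f^[j] y)) ∧ E.card = k}

/-- Minimal cardinality of an `(n,f,ε)`-spanning subset of `S`. -/
noncomputable def spanNumOn {X : Type*} [MetricSpace X] (f : X → X) (S : Set X)
    (n : ℕ) (ε : ℝ) : ℕ :=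
  sInf {k : ℕ | ∃ F : Finset X, ↑F ⊆ S ∧
    (∀ x ∈ S, ∃ y ∈ F, ∀ j < n, dist (f^[j] x) (f^[j] y) ≤ ε) ∧ F.card = k}

noncomputable def sepNum {X : Type*} [MetricSpace X] (f : X → X) (n : ℕ) (ε : ℝ) : ℕ :=
  sepNumOn f Set.univ n ε

noncomputable def spanNum {X : Type*} [MetricSpace X] (f : X → X) (n : ℕ) (ε : ℝ) : ℕ :=
  spanNumOn f Set.univ n ε

/-- The graph of a map. -/
def graphOf {X : Type*} (φ : X → X) : Set (X × X) := {p | p.2 = φ p.1}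

/-- The functional envelope: the closure, in the hyperspace of nonempty compact
subsets of `X × X` with the Hausdorff metric, of the set of graphs of continuous
self-maps of `X`. -/
def FunctionalEnvelope (X : Type*) [MetricSpace X] :
    Set (NonemptyCompacts (X × X)) :=
  closure {G : NonemptyCompacts (X × X) | ∃ φ : X → X, Continuous φ ∧
    (G : Set (X × X)) = graphOf φ}

/-- `F` is the map induced by `f` on the functional envelope:
`F(φ) = f ∘ φ`, i.e. on graphs, `F(G) = (id × f)(G)`. -/
def IsEnvelopeMap {X : Type*} [MetricSpace X] (f : X → X)
    (F : ↥(FunctionalEnvelope X) → ↥(FunctionalEnvelope X)) : Prop :=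
  ∀ G : ↥(FunctionalEnvelope X),
    ((F G : NonemptyCompacts (X × X)) : Set (X × X)) =
      Prod.map id f '' ((G : NonemptyCompacts (X × X)) : Set (X × X))

/-- The setoid on `T` identifying all points of `M` (so that `Quotient` is `T/M`). -/
def collapseSetoid {T : Type*} (M : Set T) : Setoid T where
  r a b := a = b ∨ (a ∈ M ∧ b ∈ M)
  iseqv := by
    refine ⟨fun a => Or.inl rfl, ?_, ?_⟩
    · rintro a b (rfl | ⟨h1, h2⟩)
      exacts [Or.inl rfl, Or.inr ⟨h2, h1⟩]
    · rintro a b c (rfl | ⟨h1, h2⟩) h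
      · exact h
      · rcases h with rfl | ⟨h3, h4⟩
        exacts [Or.inr ⟨h1, h2⟩, Or.inr ⟨h1, h4⟩]
section Arcs
variable {T : Type*} [TopologicalSpace T] [T2Space T]

/-- An injective path gives an arc between its endpoints. -/
lemma isArcBetween_of_injPath {a b : T} (γ : Path a b) (hγ : Function.Injective ⇑γ) :
    IsArcBetween (Set.range ⇑γ) a b := by
  have hemb : Topology.IsEmbedding ⇑γ := (γ.continuous.isClosedEmbedding hγ).toIsEmbedding
  refine ⟨hemb.toHomeomorph, ?_, ?_⟩
  · show γ (⟨0, by norm_num⟩ : unitInterval) = a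
    have : (⟨0, by norm_num⟩ : unitInterval) = 0 := rfl
    rw [this, γ.source]
  · show γ (⟨1, by norm_num⟩ : unitInterval) = b
    have : (⟨1, by norm_num⟩ : unitInterval) = 1 := rfl
    rw [this, γ.target]

/-- From an arc between `a` and `b`, get an injective path. -/
lemma injPath_of_isArcBetween {A : Set T} {a b : T} (h : IsArcBetween A a b) :
    ∃ γ : Path a b, Function.Injective ⇑γ ∧ Set.range ⇑γ = A := by
  obtain ⟨e, h0, h1⟩ := h
  refine ⟨⟨⟨fun t => (e t : T), by continuity⟩, h0, h1⟩, ?_, ?_⟩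
  · intro s t hst
    exact e.injective (Subtype.coe_injective hst)
  · show Set.range (fun t => (e t : T)) = A
    rw [show (fun t : unitInterval => (e t : T)) = Subtype.val ∘ ⇑e from rfl,
      Set.range_comp, Set.range_eq_univ.2 e.surjective, Set.image_univ,
      Subtype.range_coe]

/-- An arc is nonempty image stuff: each `IsArc` has an injective path. -/
lemma injPath_of_isArc {A : Set T} (h : IsArc A) :
    ∃ (a b : T) (γ : Path a b), Function.Injective ⇑γ ∧ Set.range ⇑γ = A := by
  obtain ⟨e⟩ := h
  obtain ⟨γ, h1, h2⟩ := injPath_of_isArcBetween (A := A) ⟨e, rfl, rfl⟩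
  exact ⟨_, _, γ, h1, h2⟩

end Arcs

section SubPath
variable {T : Type*} [TopologicalSpace T]

/-- The subpath of `γ` from parameter `s` to parameter `t` (via the extension). -/
noncomputable def subPath {a b : T} (γ : Path a b) (s t : ℝ) :
    Path (γ.extend s) (γ.extend t) where
  toFun := fun u => γ.extend (s + (u : ℝ) * (t - s))
  continuous_toFun := γ.continuous_extend.comp (by continuity)
  source' := by norm_num
  target' := by norm_num

lemma subPath_apply {a b : T} (γ : Path a b) (s t : ℝ) (u : unitInterval) :
    subPath γ s t u = γ.extend (s + (u : ℝ) * (t - s)) := rfl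

lemma affine_image_Icc (s t : ℝ) :
    (fun u : ℝ => s + u * (t - s)) '' Icc 0 1 = uIcc s t := by
  have h : (fun u : ℝ => s + u * (t - s)) = fun θ : ℝ => (1 - θ) • s + θ • t := by
    funext u; simp only [smul_eq_mul]; ring
  rw [h, ← segment_eq_image ℝ s t, segment_eq_uIcc]

lemma range_subPath {a b : T} (γ : Path a b) (s t : ℝ) :
    Set.range ⇑(subPath γ s t) = γ.extend '' uIcc s t := by
  rw [← affine_image_Icc s t]
  ext z
  constructor
  · rintro ⟨u, rfl⟩
    exact ⟨s + (u:ℝ) * (t - s), ⟨u, u.2, rfl⟩, rfl⟩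
  · rintro ⟨v, ⟨u, hu, rfl⟩, rfl⟩
    exact ⟨⟨u, hu⟩, rfl⟩

lemma extend_image_Icc {a b : T} (γ : Path a b) : γ.extend '' Icc 0 1 = Set.range ⇑γ := by
  ext z
  constructor
  · rintro ⟨v, hv, rfl⟩
    exact ⟨⟨v, hv⟩, (γ.extend_apply hv).symm ▸ rfl⟩
  · rintro ⟨u, rfl⟩
    exact ⟨u, u.2, γ.extend_apply u.2⟩

lemma range_subPath_subset {a b : T} (γ : Path a b) {s t : ℝ}
    (hs : s ∈ Icc (0:ℝ) 1) (ht : t ∈ Icc (0:ℝ) 1) :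
    Set.range ⇑(subPath γ s t) ⊆ Set.range ⇑γ := by
  rw [range_subPath, ← extend_image_Icc]
  exact Set.image_mono (uIcc_subset_Icc hs ht)

lemma affine_mem_Icc {s t : ℝ} (hs : s ∈ Icc (0:ℝ) 1) (ht : t ∈ Icc (0:ℝ) 1)
    (u : unitInterval) : s + (u : ℝ) * (t - s) ∈ Icc (0:ℝ) 1 := by
  obtain ⟨hs0, hs1⟩ := hs; obtain ⟨ht0, ht1⟩ := ht
  have hu0 : (0:ℝ) ≤ u := u.2.1
  have hu1 : (u:ℝ) ≤ 1 := u.2.2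
  constructor <;> nlinarith

lemma subPath_injective {a b : T} {γ : Path a b} (hγ : Function.Injective ⇑γ) {s t : ℝ}
    (hs : s ∈ Icc (0:ℝ) 1) (ht : t ∈ Icc (0:ℝ) 1) (hst : s ≠ t) :
    Function.Injective ⇑(subPath γ s t) := by
  intro u v h
  rw [subPath_apply, subPath_apply, γ.extend_apply (affine_mem_Icc hs ht u),
    γ.extend_apply (affine_mem_Icc hs ht v)] at h
  have := Subtype.ext_iff.1 (hγ h)
  simp only at this
  have : (u : ℝ) = v := by
    have hts : t - s ≠ 0 := sub_ne_zero.2 (Ne.symm hst)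
    exact mul_right_cancel₀ hts (by linear_combination this)
  exact Subtype.ext this

end SubPath

section GoodPath
variable {T : Type*} [TopologicalSpace T]

lemma trans_injective {a b c : T} {γ1 : Path a b} {γ2 : Path b c}
    (h1 : Function.Injective ⇑γ1) (h2 : Function.Injective ⇑γ2)
    (hmeet : Set.range ⇑γ1 ∩ Set.range ⇑γ2 ⊆ {b}) :
    Function.Injective ⇑(γ1.trans γ2) := by
  intro u v h
  rw [Path.trans_apply, Path.trans_apply] at h
  split_ifs at h with hu hv hv
  · have := h1 h
    have : (2:ℝ) * u = 2 * v := Subtype.ext_iff.1 this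
    exact Subtype.ext (by linarith)
  · exfalso
    have hb : γ1 ⟨2 * u, _⟩ ∈ ({b} : Set T) := hmeet ⟨⟨_, rfl⟩, ⟨_, h.symm⟩⟩
    have h2' : γ2 ⟨2 * (v:ℝ) - 1, unitInterval.two_mul_sub_one_mem_iff.2 ⟨(not_le.1 hv).le, v.2.2⟩⟩ = γ2 0 := by
      rw [← h, hb, γ2.source]
    have : (2:ℝ) * v - 1 = 0 := by
      have := Subtype.ext_iff.1 (h2 h2'); simpa using this
    have hv' : (v:ℝ) = 1/2 := by linarith
    rw [hv'] at hv; norm_num at hv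
  · exfalso
    have hb : γ1 ⟨2 * v, _⟩ ∈ ({b} : Set T) := hmeet ⟨⟨_, rfl⟩, ⟨_, h⟩⟩
    have h2' : γ2 ⟨2 * (u:ℝ) - 1, unitInterval.two_mul_sub_one_mem_iff.2 ⟨(not_le.1 hu).le, u.2.2⟩⟩ = γ2 0 := by
      rw [h, hb, γ2.source]
    have : (2:ℝ) * u - 1 = 0 := by
      have := Subtype.ext_iff.1 (h2 h2'); simpa using this
    have hu' : (u:ℝ) = 1/2 := by linarith
    rw [hu'] at hu; norm_num at hu
  · have := h2 h
    have : (2:ℝ) * u - 1 = 2 * v - 1 := Subtype.ext_iff.1 this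
    exact Subtype.ext (by linarith)

/-- There is an injective path from `a` to `b` avoiding `p`. -/
def GoodPath (p a b : T) : Prop :=
  ∃ γ : Path a b, Function.Injective ⇑γ ∧ p ∉ Set.range ⇑γ

lemma GoodPath.ne {p a b : T} (h : GoodPath p a b) : a ≠ b := by
  obtain ⟨γ, hγ, -⟩ := h
  intro hab
  subst hab
  have : γ 0 = γ 1 := by rw [γ.source, γ.target]
  have := hγ this
  have h01 := Subtype.ext_iff.1 this
  norm_num at h01

lemma GoodPath.symm {p a b : T} (h : GoodPath p a b) : GoodPath p b a := by
  obtain ⟨γ, hγ, hp⟩ := h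
  refine ⟨γ.symm, ?_, ?_⟩
  · intro u v huv
    have : γ (unitInterval.symm u) = γ (unitInterval.symm v) := huv
    have := hγ this
    exact unitInterval.symm_bijective.injective this
  · rwa [Path.symm_range]

lemma GoodPath.avoid {p a b : T} (h : GoodPath p a b) : p ≠ a ∧ p ≠ b := by
  obtain ⟨γ, -, hp⟩ := h
  exact ⟨fun h' => hp ⟨0, by rw [γ.source, ← h']⟩, fun h' => hp ⟨1, by rw [γ.target, ← h']⟩⟩

lemma goodPath_trans [T2Space T] {p a b c : T} (hab : GoodPath p a b)
    (hbc : GoodPath p b c) (hac : a ≠ c) : GoodPath p a c := by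
  obtain ⟨α, hα, hpα⟩ := hab
  obtain ⟨β, hβ, hpβ⟩ := hbc
  have hK : IsClosed (Set.range ⇑β) := (isCompact_range β.continuous).isClosed
  set S : Set ℝ := Icc 0 1 ∩ α.extend ⁻¹' Set.range ⇑β with hS
  have hSclosed : IsClosed S := isClosed_Icc.inter (hK.preimage α.continuous_extend)
  have h1S : (1:ℝ) ∈ S := by
    refine ⟨⟨by norm_num, le_refl 1⟩, ?_⟩
    simp only [Set.mem_preimage, α.extend_one]
    exact ⟨0, β.source⟩
  have hbdd : BddBelow S := ⟨0, fun v hv => hv.1.1⟩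
  set t0 := sInf S with ht0
  have ht0S : t0 ∈ S := hSclosed.csInf_mem ⟨1, h1S⟩ hbdd
  have ht0min : ∀ v ∈ Icc (0:ℝ) 1, v < t0 → α.extend v ∉ Set.range ⇑β := by
    intro v hv hvt hmem
    exact absurd (csInf_le hbdd ⟨hv, hmem⟩) (not_le.2 hvt)
  obtain ⟨s1, hs1⟩ : ∃ s1 : unitInterval, β s1 = α.extend t0 := by
    obtain ⟨u, hu⟩ := ht0S.2
    exact ⟨u, hu⟩
  have hs1I : (s1 : ℝ) ∈ Icc (0:ℝ) 1 := s1.2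
  by_cases h0 : t0 = 0
  · -- a itself is on β; use the subpath of β from s1 to 1
    have hqa : β.extend (s1:ℝ) = a := by
      rw [β.extend_apply s1.2]
      simp only [Subtype.coe_eta]
      rw [hs1, h0, α.extend_zero]
    have hne : (s1 : ℝ) ≠ 1 := by
      intro h'
      apply hac
      rw [← hqa, h', β.extend_one]
    refine ⟨(subPath β s1 1).cast hqa.symm β.extend_one.symm, ?_, ?_⟩
    · show Function.Injective ⇑(subPath β s1 1)
      exact subPath_injective hβ hs1I ⟨by norm_num, le_refl 1⟩ hne
    · show p ∉ Set.range ⇑(subPath β s1 1)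
      intro hmem
      exact hpβ (range_subPath_subset β hs1I ⟨by norm_num, le_refl 1⟩ hmem)
  · have ht0I : t0 ∈ Icc (0:ℝ) 1 := ht0S.1
    have h0t : (0:ℝ) ≠ t0 := fun h' => h0 h'.symm
    by_cases hqc : α.extend t0 = c
    · refine ⟨(subPath α 0 t0).cast α.extend_zero.symm hqc.symm, ?_, ?_⟩
      · show Function.Injective ⇑(subPath α 0 t0)
        exact subPath_injective hα ⟨le_refl 0, by norm_num⟩ ht0I h0t
      · show p ∉ Set.range ⇑(subPath α 0 t0)
        intro hmem
        exact hpα (range_subPath_subset α ⟨le_refl 0, by norm_num⟩ ht0I hmem)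
    · have hs1ne : (s1 : ℝ) ≠ 1 := by
        intro h'
        apply hqc
        have hs1eq : s1 = (1 : unitInterval) := Subtype.ext (by simpa using h')
        rw [← hs1, hs1eq, β.target]
      set σ1 : Path a (α.extend t0) := (subPath α 0 t0).cast α.extend_zero.symm rfl
      set σ2 : Path (α.extend t0) c :=
        (subPath β s1 1).cast (by rw [β.extend_apply s1.2]; simp only [Subtype.coe_eta]; rw [hs1]) β.extend_one.symm
      have hσ1inj : Function.Injective ⇑σ1 :=
        subPath_injective hα ⟨le_refl 0, by norm_num⟩ ht0I h0t
      have hσ2inj : Function.Injective ⇑σ2 :=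
        subPath_injective hβ hs1I ⟨by norm_num, le_refl 1⟩ hs1ne
      have hr1 : Set.range ⇑σ1 = α.extend '' Icc 0 t0 := by
        show Set.range ⇑(subPath α 0 t0) = _
        rw [range_subPath, uIcc_of_le ht0I.1]
      have hr2 : Set.range ⇑σ2 ⊆ Set.range ⇑β := by
        show Set.range ⇑(subPath β s1 1) ⊆ _
        exact range_subPath_subset β hs1I ⟨by norm_num, le_refl 1⟩
      have hmeet : Set.range ⇑σ1 ∩ Set.range ⇑σ2 ⊆ {α.extend t0} := by
        rintro z ⟨hz1, hz2⟩
        rw [hr1] at hz1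
        obtain ⟨v, hv, rfl⟩ := hz1
        have hvI : v ∈ Icc (0:ℝ) 1 := ⟨hv.1, hv.2.trans ht0I.2⟩
        have : ¬ v < t0 := fun hlt => ht0min v hvI hlt (hr2 hz2)
        have : v = t0 := le_antisymm hv.2 (not_lt.1 this)
        rw [this]; rfl
      refine ⟨σ1.trans σ2, trans_injective hσ1inj hσ2inj hmeet, ?_⟩
      rw [Path.trans_range]
      rintro (hmem | hmem)
      · rw [hr1] at hmem
        obtain ⟨v, hv, hveq⟩ := hmem
        have hvI : v ∈ Icc (0:ℝ) 1 := ⟨hv.1, hv.2.trans ht0I.2⟩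
        apply hpα
        rw [← hveq, α.extend_apply hvI]
        exact ⟨_, rfl⟩
      · exact hpβ (hr2 hmem)

end GoodPath

section Tree
variable {T : Type*} [MetricSpace T] (hT : IsTreeSpace T)

lemma treeArc_self (a : T) : treeArc hT a a = {a} := by
  unfold treeArc
  simp

lemma treeArc_isArcBetween {a b : T} (h : a ≠ b) : IsArcBetween (treeArc hT a b) a b := by
  unfold treeArc
  rw [dif_neg h]
  exact (hT.uniqueArc a b h).choose_spec.1

lemma treeArc_unique {A : Set T} {a b : T} (h : a ≠ b) (hA : IsArcBetween A a b) :
    A = treeArc hT a b := by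
  unfold treeArc
  rw [dif_neg h]
  exact (hT.uniqueArc a b h).choose_spec.2 A hA

lemma treeArc_path {a b : T} (h : a ≠ b) :
    ∃ γ : Path a b, Function.Injective ⇑γ ∧ Set.range ⇑γ = treeArc hT a b :=
  injPath_of_isArcBetween (treeArc_isArcBetween hT h)

lemma left_mem_treeArc (a b : T) : a ∈ treeArc hT a b := by
  by_cases h : a = b
  · subst h; rw [treeArc_self]; rfl
  · obtain ⟨γ, -, hr⟩ := treeArc_path hT h
    rw [← hr]
    exact ⟨0, γ.source⟩

lemma right_mem_treeArc (a b : T) : b ∈ treeArc hT a b := by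
  by_cases h : a = b
  · subst h; rw [treeArc_self]; rfl
  · obtain ⟨γ, -, hr⟩ := treeArc_path hT h
    rw [← hr]
    exact ⟨1, γ.target⟩

lemma treeArc_isPreconnected (a b : T) : IsPreconnected (treeArc hT a b) := by
  by_cases h : a = b
  · subst h; rw [treeArc_self]; exact isPreconnected_singleton
  · obtain ⟨γ, -, hr⟩ := treeArc_path hT h
    rw [← hr]
    exact isPreconnected_range γ.continuous

lemma goodPath_not_mem_treeArc {p a b : T} (h : GoodPath p a b) :
    p ∉ treeArc hT a b := by
  obtain ⟨γ, hγ, hp⟩ := h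
  have hab : a ≠ b := GoodPath.ne ⟨γ, hγ, hp⟩
  rwa [← treeArc_unique hT hab (isArcBetween_of_injPath γ hγ)]

end Tree

section Pieces
variable {T : Type*} [TopologicalSpace T] [T2Space T]

lemma subPath_goodPath {a b : T} {γ : Path a b} (hγ : Function.Injective ⇑γ)
    {p : T} {v1 v2 : ℝ} (h1 : v1 ∈ Icc (0:ℝ) 1) (h2 : v2 ∈ Icc (0:ℝ) 1)
    (hne : γ.extend v1 ≠ γ.extend v2)
    (hp : ∀ w ∈ uIcc v1 v2, γ.extend w ≠ p) :
    GoodPath p (γ.extend v1) (γ.extend v2) := by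
  have hv : v1 ≠ v2 := fun h => hne (by rw [h])
  refine ⟨subPath γ v1 v2, subPath_injective hγ h1 h2 hv, ?_⟩
  rw [range_subPath]
  rintro ⟨w, hw, hwp⟩
  exact hp w hw hwp

/-- For an arc `A` and a point `p`, a finite collection of "pieces" of `A` minus `p`. -/
lemma arc_pieces {A : Set T} (hA : IsArc A) (p : T) :
    ∃ PS : Set (Set T), PS.Finite ∧
      (∀ P ∈ PS, ∃ Cl : Set T, IsClosed Cl ∧ P = Cl \ {p}) ∧
      (∀ P ∈ PS, ∀ q1 ∈ P, ∀ q2 ∈ P, q1 = q2 ∨ GoodPath p q1 q2) ∧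
      (∀ q ∈ A, q ≠ p → ∃ P ∈ PS, q ∈ P) := by
  obtain ⟨a0, b0, γ, hγ, hrange⟩ := injPath_of_isArc hA
  by_cases hpA : p ∈ A
  · obtain ⟨u, hu⟩ : ∃ u : unitInterval, γ u = p := by rw [← hrange] at hpA; exact hpA
    set t : ℝ := (u : ℝ) with htdef
    have htI : t ∈ Icc (0:ℝ) 1 := u.2
    have hext : γ.extend t = p := by rw [γ.extend_apply u.2, Subtype.coe_eta, hu]
    refine ⟨{γ.extend '' Icc 0 t \ {p}, γ.extend '' Icc t 1 \ {p}}, ?_, ?_, ?_, ?_⟩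
    · exact (Set.finite_singleton _).insert _
    · rintro P (rfl | rfl)
      · exact ⟨γ.extend '' Icc 0 t,
          (isCompact_Icc.image γ.continuous_extend).isClosed, rfl⟩
      · exact ⟨γ.extend '' Icc t 1,
          (isCompact_Icc.image γ.continuous_extend).isClosed, rfl⟩
    · rintro P (rfl | rfl) q1 ⟨⟨v1, hv1, rfl⟩, hq1p⟩ q2 ⟨⟨v2, hv2, rfl⟩, hq2p⟩
      · by_cases hq : γ.extend v1 = γ.extend v2
        · exact Or.inl hq
        refine Or.inr (subPath_goodPath hγ ⟨hv1.1, hv1.2.trans htI.2⟩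
          ⟨hv2.1, hv2.2.trans htI.2⟩ hq ?_)
        intro w hw hwp
        have hwt : w ∈ Icc (0:ℝ) t := uIcc_subset_Icc hv1 hv2 hw
        have hwI : w ∈ Icc (0:ℝ) 1 := ⟨hwt.1, hwt.2.trans htI.2⟩
        have : (⟨w, hwI⟩ : unitInterval) = u := by
          apply hγ; rw [← γ.extend_apply hwI, hwp, ← hu]
        have hwteq : w = t := Subtype.ext_iff.1 this
        rw [hwteq] at hw
        rcases (mem_uIcc.1 hw) with ⟨h1, h2⟩ | ⟨h1, h2⟩
        · have : v2 = t := le_antisymm hv2.2 h2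
          exact hq2p (by simp only [mem_singleton_iff]; rw [this, hext])
        · have : v1 = t := le_antisymm hv1.2 h2
          exact hq1p (by simp only [mem_singleton_iff]; rw [this, hext])
      · by_cases hq : γ.extend v1 = γ.extend v2
        · exact Or.inl hq
        refine Or.inr (subPath_goodPath hγ ⟨htI.1.trans hv1.1, hv1.2⟩
          ⟨htI.1.trans hv2.1, hv2.2⟩ hq ?_)
        intro w hw hwp
        have hwt : w ∈ Icc t 1 := uIcc_subset_Icc hv1 hv2 hw
        have hwI : w ∈ Icc (0:ℝ) 1 := ⟨htI.1.trans hwt.1, hwt.2⟩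
        have : (⟨w, hwI⟩ : unitInterval) = u := by
          apply hγ; rw [← γ.extend_apply hwI, hwp, ← hu]
        have hwteq : w = t := Subtype.ext_iff.1 this
        rw [hwteq] at hw
        rcases (mem_uIcc.1 hw) with ⟨h1, h2⟩ | ⟨h1, h2⟩
        · have : v1 = t := le_antisymm h1 hv1.1
          exact hq1p (by simp only [mem_singleton_iff]; rw [this, hext])
        · have : v2 = t := le_antisymm h1 hv2.1
          exact hq2p (by simp only [mem_singleton_iff]; rw [this, hext])
    · intro q hq hqp
      rw [← hrange] at hq
      obtain ⟨w, rfl⟩ := hq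
      rcases le_total (w : ℝ) t with hwt | hwt
      · refine ⟨_, Or.inl rfl, ⟨⟨w, ⟨w.2.1, hwt⟩, γ.extend_apply w.2⟩, hqp⟩⟩
      · refine ⟨_, Or.inr rfl, ⟨⟨w, ⟨hwt, w.2.2⟩, γ.extend_apply w.2⟩, hqp⟩⟩
  · refine ⟨{A}, Set.finite_singleton _, ?_, ?_, ?_⟩
    · rintro P hP
      rw [Set.mem_singleton_iff] at hP; subst hP
      refine ⟨P, ?_, (Set.diff_singleton_eq_self hpA).symm⟩
      rw [← hrange]
      exact (isCompact_range γ.continuous).isClosed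
    · rintro P hP q1 hq1 q2 hq2
      rw [Set.mem_singleton_iff] at hP; subst hP
      rw [← hrange] at hq1 hq2
      obtain ⟨w1, rfl⟩ := hq1
      obtain ⟨w2, rfl⟩ := hq2
      by_cases hq : γ w1 = γ w2
      · exact Or.inl hq
      rw [← γ.extend_apply w1.2, ← γ.extend_apply w2.2] at hq ⊢
      refine Or.inr (subPath_goodPath hγ w1.2 w2.2 hq ?_)
      intro w hw hwp
      apply hpA
      rw [← hrange, ← hwp, γ.extend_apply (uIcc_subset_Icc w1.2 w2.2 hw)]
      exact ⟨_, rfl⟩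
    · intro q hq hqp
      exact ⟨A, rfl, hq⟩

end Pieces

section Sep
variable {T : Type*} [MetricSpace T]

/-- Key separation lemma: any preconnected set containing `a` and `b` contains every
point of the arc from `a` to `b`. -/
lemma sep (hT : IsTreeSpace T) {a b p : T} (hp : p ∈ treeArc hT a b)
    (hpa : p ≠ a) (hpb : p ≠ b) {D : Set T} (hD : IsPreconnected D)
    (ha : a ∈ D) (hb : b ∈ D) : p ∈ D := by
  by_contra hpD
  have hab : a ≠ b := by
    rintro rfl
    rw [treeArc_self] at hp
    exact hpa hp
  -- Build the finite collection of pieces covering `T \ {p}`.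
  obtain ⟨PS, hPSfin, hPScl, hPSgood, hPScov⟩ :
      ∃ PS : Set (Set T), PS.Finite ∧
        (∀ P ∈ PS, ∃ Cl : Set T, IsClosed Cl ∧ P = Cl \ {p}) ∧
        (∀ P ∈ PS, ∀ q1 ∈ P, ∀ q2 ∈ P, q1 = q2 ∨ GoodPath p q1 q2) ∧
        (∀ q : T, q ≠ p → ∃ P ∈ PS, q ∈ P) := by
    rcases hT.finiteArcs with ⟨c, hc⟩ | ⟨s, hs_arc, hs_cover⟩
    · exfalso
      apply hab
      have ha' : a ∈ ({c} : Set T) := hc ▸ Set.mem_univ a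
      have hb' : b ∈ ({c} : Set T) := hc ▸ Set.mem_univ b
      rw [Set.mem_singleton_iff] at ha' hb'
      rw [ha', hb']
    · have hAP : ∀ A ∈ s, ∃ PS : Set (Set T), PS.Finite ∧
          (∀ P ∈ PS, ∃ Cl : Set T, IsClosed Cl ∧ P = Cl \ {p}) ∧
          (∀ P ∈ PS, ∀ q1 ∈ P, ∀ q2 ∈ P, q1 = q2 ∨ GoodPath p q1 q2) ∧
          (∀ q ∈ A, q ≠ p → ∃ P ∈ PS, q ∈ P) :=
        fun A hA => arc_pieces (hs_arc A hA) p
      choose F hFfin hFcl hFgood hFcov using hAP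
      refine ⟨⋃ (A : Set T) (hA : A ∈ s), F A hA, ?_, ?_, ?_, ?_⟩
      · exact s.finite_toSet.biUnion' (fun A hA => hFfin A hA)
      · intro P hP
        simp only [Set.mem_iUnion] at hP
        obtain ⟨A, hA, hPA⟩ := hP
        exact hFcl A hA P hPA
      · intro P hP
        simp only [Set.mem_iUnion] at hP
        obtain ⟨A, hA, hPA⟩ := hP
        exact hFgood A hA P hPA
      · intro q hq
        have : q ∈ ⋃₀ (s : Set (Set T)) := hs_cover ▸ Set.mem_univ q
        obtain ⟨A, hA, hqA⟩ := this
        obtain ⟨P, hP, hqP⟩ := hFcov A hA q hqA hq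
        exact ⟨P, Set.mem_iUnion.2 ⟨A, Set.mem_iUnion.2 ⟨hA, hP⟩⟩, hqP⟩
  classical
  -- the set of points reachable from `a` by an injective path avoiding `p`
  set U : Set T := {q | q ≠ p ∧ (q = a ∨ GoodPath p a q)} with hU
  have haU : a ∈ U := ⟨fun h => hpa h.symm, Or.inl rfl⟩
  have hPnotp : ∀ P ∈ PS, p ∉ P := by
    intro P hP hpP
    obtain ⟨Cl, -, rfl⟩ := hPScl P hP
    exact hpP.2 rfl
  have hpiece_sub : ∀ P ∈ PS, (P ∩ U).Nonempty → P ⊆ U := by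
    rintro P hP ⟨q, hqP, hqU⟩ q' hq'P
    have hq'p : q' ≠ p := fun h => hPnotp P hP (h ▸ hq'P)
    refine ⟨hq'p, ?_⟩
    by_cases hq'a : q' = a
    · exact Or.inl hq'a
    rcases hPSgood P hP q hqP q' hq'P with rfl | hgood
    · exact hqU.2
    rcases hqU.2 with rfl | hgood2
    · exact Or.inr hgood
    · exact Or.inr (goodPath_trans hgood2 hgood (fun h => hq'a h.symm))
  -- the pieces meeting `U` and those not meeting it
  set PSU : Set (Set T) := {P ∈ PS | (P ∩ U).Nonempty} with hPSU
  set PSV : Set (Set T) := {P ∈ PS | ¬(P ∩ U).Nonempty} with hPSV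
  have hClfun : ∀ P : Set T, ∃ Cl : Set T, P ∈ PS → IsClosed Cl ∧ P = Cl \ {p} := by
    intro P
    by_cases hP : P ∈ PS
    · obtain ⟨Cl, h1, h2⟩ := hPScl P hP
      exact ⟨Cl, fun _ => ⟨h1, h2⟩⟩
    · exact ⟨∅, fun h => absurd h hP⟩
  choose Cl hCl using hClfun
  set KU : Set T := ⋃ P ∈ PSU, Cl P with hKU
  set KV : Set T := ⋃ P ∈ PSV, Cl P with hKV
  have hKUclosed : IsClosed KU :=
    (hPSfin.subset (fun P hP => hP.1)).isClosed_biUnion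
      (fun P hP => (hCl P hP.1).1)
  have hKVclosed : IsClosed KV :=
    (hPSfin.subset (fun P hP => hP.1)).isClosed_biUnion
      (fun P hP => (hCl P hP.1).1)
  have hUeq : U = KU \ {p} := by
    ext q
    constructor
    · intro hqU
      obtain ⟨P, hP, hqP⟩ := hPScov q hqU.1
      have hPU : P ∈ PSU := ⟨hP, ⟨q, hqP, hqU⟩⟩
      refine ⟨Set.mem_biUnion hPU ?_, hqU.1⟩
      rw [(hCl P hP).2] at hqP
      exact hqP.1
    · rintro ⟨hqKU, hqp⟩
      obtain ⟨P, hP, hqC⟩ := Set.mem_iUnion₂.1 hqKU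
      have hqP : q ∈ P := by
        rw [(hCl P hP.1).2]
        exact ⟨hqC, hqp⟩
      exact hpiece_sub P hP.1 hP.2 hqP
  have hVU : ∀ q, q ∈ KV \ {p} → q ∉ U := by
    rintro q ⟨hqKV, hqp⟩ hqU
    obtain ⟨P, hP, hqC⟩ := Set.mem_iUnion₂.1 hqKV
    have hqP : q ∈ P := by
      rw [(hCl P hP.1).2]
      exact ⟨hqC, hqp⟩
    exact hP.2 ⟨q, hqP, hqU⟩
  have hcover : ∀ q : T, q ≠ p → q ∈ KU ∨ q ∈ KV := by
    intro q hq
    obtain ⟨P, hP, hqP⟩ := hPScov q hq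
    have hqCl : q ∈ Cl P := by
      rw [(hCl P hP).2] at hqP
      exact hqP.1
    by_cases hPU : (P ∩ U).Nonempty
    · exact Or.inl (Set.mem_biUnion ⟨hP, hPU⟩ hqCl)
    · exact Or.inr (Set.mem_biUnion ⟨hP, hPU⟩ hqCl)
  set Uo : Set T := {p}ᶜ ∩ KVᶜ with hUo
  set Vo : Set T := {p}ᶜ ∩ KUᶜ with hVo
  have hUoopen : IsOpen Uo := (isClosed_singleton.isOpen_compl).inter hKVclosed.isOpen_compl
  have hVoopen : IsOpen Vo := (isClosed_singleton.isOpen_compl).inter hKUclosed.isOpen_compl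
  have hUmem : ∀ q : T, q ≠ p → q ∈ KU → q ∈ U := by
    intro q hqp hqKU
    rw [hUeq]
    exact ⟨hqKU, hqp⟩
  have hDsub : D ⊆ Uo ∪ Vo := by
    intro q hqD
    have hqp : q ≠ p := fun h => hpD (h ▸ hqD)
    rcases hcover q hqp with h | h
    · refine Or.inl ⟨hqp, fun hqKV => ?_⟩
      exact hVU q ⟨hqKV, hqp⟩ (hUmem q hqp h)
    · refine Or.inr ⟨hqp, fun hqKU => ?_⟩
      exact hVU q ⟨h, hqp⟩ (hUmem q hqp hqKU)
  have haUo : a ∈ Uo := by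
    refine ⟨fun h => hpa (Set.mem_singleton_iff.1 h).symm, fun haKV => ?_⟩
    exact hVU a ⟨haKV, fun h => hpa h.symm⟩ haU
  by_cases hbVo : b ∈ Vo
  · obtain ⟨q, hqD, hqUo, hqVo⟩ :=
      hD Uo Vo hUoopen hVoopen hDsub ⟨a, ha, haUo⟩ ⟨b, hb, hbVo⟩
    have hqp : q ≠ p := hqUo.1
    rcases hcover q hqp with h | h
    · exact hqVo.2 h
    · exact hqUo.2 h
  · have hbp : b ≠ p := fun h => hpb h.symm
    have hbKU : b ∈ KU := by
      by_contra hbKU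
      exact hbVo ⟨hbp, hbKU⟩
    have hbU : b ∈ U := hUmem b hbp hbKU
    rcases hbU.2 with rfl | hgood
    · exact hab rfl
    · exact goodPath_not_mem_treeArc hT hgood hp

end Sep

section TreeLemmas
variable {T : Type*} [MetricSpace T] (hT : IsTreeSpace T)

lemma treeArc_subset_of_isPreconnected {a b : T} {D : Set T}
    (hD : IsPreconnected D) (ha : a ∈ D) (hb : b ∈ D) : treeArc hT a b ⊆ D := by
  intro p hp
  by_cases hpa : p = a
  · exact hpa ▸ ha
  by_cases hpb : p = b
  · exact hpb ▸ hb
  exact sep hT hp hpa hpb hD ha hb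

lemma treeArc_tripod (x a b : T) :
    treeArc hT a b ⊆ treeArc hT x a ∪ treeArc hT x b := by
  apply treeArc_subset_of_isPreconnected hT
  · exact (treeArc_isPreconnected hT x a).union x (left_mem_treeArc hT x a)
      (left_mem_treeArc hT x b) (treeArc_isPreconnected hT x b)
  · exact Or.inl (right_mem_treeArc hT x a)
  · exact Or.inr (right_mem_treeArc hT x b)

lemma treeArc_comparable_aux {x e : T} {γ : Path x e} (hγ : Function.Injective ⇑γ)
    (s t : unitInterval) (hst : (s : ℝ) ≤ t) : γ s ∈ treeArc hT x (γ t) := by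
  by_cases hxt : x = γ t
  · have h0 : γ 0 = γ t := γ.source.trans hxt
    have ht0 : t = 0 := (hγ h0).symm
    have hs0 : s = 0 := by
      apply Subtype.ext
      have := hst
      rw [ht0] at this
      exact le_antisymm (by exact_mod_cast this) s.2.1
    rw [hs0, γ.source, ← hxt, treeArc_self]
    rfl
  · have ht0 : (0:ℝ) ≠ (t:ℝ) := by
      intro h
      exact hxt (γ.source.symm.trans (congrArg γ (Subtype.ext h)))
    set σ : Path x (γ t) :=
      (subPath γ 0 t).cast γ.extend_zero.symm (γ.extend_extends' t).symm with hσ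
    have hσinj : Function.Injective ⇑σ :=
      subPath_injective hγ ⟨le_refl 0, by norm_num⟩ t.2 ht0
    have harc : IsArcBetween (Set.range ⇑σ) x (γ t) := isArcBetween_of_injPath σ hσinj
    rw [← treeArc_unique hT hxt harc]
    show γ s ∈ Set.range ⇑(subPath γ 0 t)
    rw [range_subPath, uIcc_of_le (t.2.1 : (0:ℝ) ≤ t)]
    exact ⟨s, ⟨s.2.1, hst⟩, γ.extend_apply s.2⟩

lemma treeArc_comparable {x e u v : T} (hu : u ∈ treeArc hT x e)
    (hv : v ∈ treeArc hT x e) : u ∈ treeArc hT x v ∨ v ∈ treeArc hT x u := by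
  by_cases hxe : x = e
  · subst hxe
    rw [treeArc_self] at hu hv
    rw [hu, hv]
    exact Or.inl (left_mem_treeArc hT x x)
  obtain ⟨γ, hγ, hrange⟩ := treeArc_path hT hxe
  rw [← hrange] at hu hv
  obtain ⟨s, rfl⟩ := hu
  obtain ⟨t, rfl⟩ := hv
  rcases le_total (s:ℝ) (t:ℝ) with h | h
  · exact Or.inl (treeArc_comparable_aux hT hγ s t h)
  · exact Or.inr (treeArc_comparable_aux hT hγ t s h)

lemma exists_first_hit {x z : T} {K : Set T} (hK : IsClosed K) (hz : z ∈ K) :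
    ∃ w, w ∈ K ∧ w ∈ treeArc hT x z ∧ ∀ q ∈ treeArc hT x w, q ∈ K → q = w := by
  by_cases hxz : x = z
  · subst hxz
    refine ⟨x, hz, left_mem_treeArc hT x x, ?_⟩
    intro q hq hqK
    rw [treeArc_self] at hq
    exact hq
  obtain ⟨γ, hγ, hrange⟩ := treeArc_path hT hxz
  set S : Set ℝ := Icc 0 1 ∩ γ.extend ⁻¹' K with hS
  have hSclosed : IsClosed S := isClosed_Icc.inter (hK.preimage γ.continuous_extend)
  have h1S : (1:ℝ) ∈ S := by
    refine ⟨⟨by norm_num, le_refl 1⟩, ?_⟩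
    simp only [Set.mem_preimage, γ.extend_one]
    exact hz
  have hbdd : BddBelow S := ⟨0, fun v hv => hv.1.1⟩
  set t0 := sInf S with ht0
  have ht0S : t0 ∈ S := hSclosed.csInf_mem ⟨1, h1S⟩ hbdd
  set w := γ.extend t0 with hw
  refine ⟨w, ht0S.2, ?_, ?_⟩
  · rw [← hrange, hw, γ.extend_apply ht0S.1]
    exact ⟨_, rfl⟩
  · intro q hq hqK
    by_cases hxw : x = w
    · rw [← hxw, treeArc_self] at hq
      rw [hq, hxw]
    · have h0t0 : (0:ℝ) ≠ t0 := by
        intro h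
        apply hxw
        rw [hw, ← h, γ.extend_zero]
      set σ : Path x w := (subPath γ 0 t0).cast γ.extend_zero.symm rfl with hσ
      have hσinj : Function.Injective ⇑σ :=
        subPath_injective hγ ⟨le_refl 0, by norm_num⟩ ht0S.1 h0t0
      have harc : IsArcBetween (Set.range ⇑σ) x w := isArcBetween_of_injPath σ hσinj
      rw [← treeArc_unique hT hxw harc] at hq
      have hq' : q ∈ Set.range ⇑(subPath γ 0 t0) := hq
      rw [range_subPath, uIcc_of_le ht0S.1.1] at hq'
      obtain ⟨v, hv, rfl⟩ := hq'
      have hvI : v ∈ Icc (0:ℝ) 1 := ⟨hv.1, hv.2.trans ht0S.1.2⟩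
      have hvS : v ∈ S := ⟨hvI, hqK⟩
      have : t0 ≤ v := csInf_le hbdd hvS
      have : v = t0 := le_antisymm hv.2 this
      rw [this]

lemma exists_endpoint_cover (x : T) :
    ∃ E : Set T, E.Finite ∧ ∀ q : T, ∃ e ∈ E, q ∈ treeArc hT x e := by
  rcases hT.finiteArcs with ⟨c, hc⟩ | ⟨s, hs_arc, hs_cover⟩
  · refine ⟨{x}, Set.finite_singleton x, fun q => ⟨x, rfl, ?_⟩⟩
    have hq : q ∈ ({c} : Set T) := hc ▸ Set.mem_univ q
    have hx : x ∈ ({c} : Set T) := hc ▸ Set.mem_univ x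
    rw [Set.mem_singleton_iff] at hq hx
    rw [hq, ← hx, treeArc_self]
    rfl
  · have hAE : ∀ A ∈ s, ∃ E' : Set T, E'.Finite ∧
        ∀ q ∈ A, ∃ e ∈ E', q ∈ treeArc hT x e := by
      intro A hA
      obtain ⟨a0, b0, γ, hγ, hrange⟩ := injPath_of_isArc (hs_arc A hA)
      have hab : a0 ≠ b0 := by
        intro h
        have : γ 0 = γ 1 := by rw [γ.source, γ.target, h]
        have := hγ this
        have h01 := Subtype.ext_iff.1 this
        norm_num at h01
      have hAarc : A = treeArc hT a0 b0 :=
        hrange ▸ treeArc_unique hT hab (isArcBetween_of_injPath γ hγ)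
      refine ⟨{a0, b0}, (Set.finite_singleton _).insert _, fun q hq => ?_⟩
      have : q ∈ treeArc hT x a0 ∪ treeArc hT x b0 :=
        treeArc_tripod hT x a0 b0 (hAarc ▸ hq)
      rcases this with h | h
      · exact ⟨a0, Or.inl rfl, h⟩
      · exact ⟨b0, Or.inr rfl, h⟩
    choose E hEfin hEcov using hAE
    refine ⟨⋃ (A : Set T) (hA : A ∈ s), E A hA, s.finite_toSet.biUnion' hEfin, ?_⟩
    intro q
    have : q ∈ ⋃₀ (s : Set (Set T)) := hs_cover ▸ Set.mem_univ q
    obtain ⟨A, hA, hqA⟩ := this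
    obtain ⟨e, he, hqe⟩ := hEcov A hA q hqA
    exact ⟨e, Set.mem_iUnion.2 ⟨A, Set.mem_iUnion.2 ⟨hA, he⟩⟩, hqe⟩

/-- The set of "first hit" points of a closed set `K` (seen from `x`) is finite. -/
lemma firstHit_finite (x : T) (K : Set T) :
    {w | w ∈ K ∧ ∀ q ∈ treeArc hT x w, q ∈ K → q = w}.Finite := by
  classical
  obtain ⟨E, hEfin, hEcov⟩ := exists_endpoint_cover hT x
  set W := {w | w ∈ K ∧ ∀ q ∈ treeArc hT x w, q ∈ K → q = w} with hW
  set φ : T → T := fun w => (hEcov w).choose with hφ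
  have hφE : ∀ w, φ w ∈ E := fun w => (hEcov w).choose_spec.1
  have hφmem : ∀ w, w ∈ treeArc hT x (φ w) := fun w => (hEcov w).choose_spec.2
  have hinj : Set.InjOn φ W := by
    intro w hw w' hw' heq
    have h1 : w ∈ treeArc hT x (φ w') := heq ▸ hφmem w
    rcases treeArc_comparable hT h1 (hφmem w') with h | h
    · exact (hw'.2 w h hw.1)
    · exact (hw.2 w' h hw'.1).symm
  exact Set.Finite.of_finite_image (hEfin.subset (Set.image_subset_iff.2
    (fun w _ => hφE w))) hinj

end TreeLemmas

lemma mem_Ls_iff {T : Type*} {f : T → T} {A : Set T} {y : T} :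
    y ∈ Ls f A ↔ ∀ m : ℕ, ∃ n : ℕ, m ≤ n ∧ y ∈ f^[n] '' A := by
  simp [Ls, Set.mem_iInter, Set.mem_iUnion]


/-- `Ls(f,A)` is connected, contains the fixed point `x`, and is
strongly invariant. -/
theorem ls_connected_strongly_invariant {T : Type*} [MetricSpace T]
    (hT : IsTreeSpace T) (f : T → T) (hf : Continuous f)
    (A : Set T) (hA : IsSubcontinuum A) (x : T) (hx : x ∈ A) (hfx : f x = x) :
    x ∈ Ls f A ∧ IsConnected (Ls f A) ∧ f '' Ls f A = Ls f A := by
  classical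
  have hxAn : ∀ n : ℕ, x ∈ f^[n] '' A := fun n => ⟨x, hx, Function.iterate_fixed hfx n⟩
  have hxLs : x ∈ Ls f A := mem_Ls_iff.2 fun m => ⟨m, le_refl m, hxAn m⟩
  have hAnconn : ∀ n : ℕ, IsPreconnected (f^[n] '' A) := fun n =>
    hA.2.2.2.image _ (hf.iterate n).continuousOn
  have harc_sub : ∀ (y : T) (n : ℕ), y ∈ f^[n] '' A → treeArc hT x y ⊆ f^[n] '' A :=
    fun y n hy => treeArc_subset_of_isPreconnected hT (hAnconn n) (hxAn n) hy
  have harcLs : ∀ y ∈ Ls f A, treeArc hT x y ⊆ Ls f A := by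
    intro y hy q hq
    rw [mem_Ls_iff] at hy ⊢
    intro m
    obtain ⟨n, hmn, hyn⟩ := hy m
    exact ⟨n, hmn, harc_sub y n hyn hq⟩
  refine ⟨hxLs, ?_, ?_⟩
  · -- connectedness
    have hLseq : Ls f A = ⋃₀ ((fun y => treeArc hT x y) '' Ls f A) := by
      ext q
      constructor
      · intro hq
        exact ⟨treeArc hT x q, ⟨q, hq, rfl⟩, right_mem_treeArc hT x q⟩
      · rintro ⟨S, ⟨y, hy, rfl⟩, hqS⟩
        exact harcLs y hy hqS
    refine ⟨⟨x, hxLs⟩, ?_⟩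
    rw [hLseq]
    apply isPreconnected_sUnion x
    · rintro S ⟨y, hy, rfl⟩
      exact left_mem_treeArc hT x y
    · rintro S ⟨y, hy, rfl⟩
      exact treeArc_isPreconnected hT x y
  · -- strong invariance
    apply Set.Subset.antisymm
    · rintro _ ⟨y, hy, rfl⟩
      rw [mem_Ls_iff] at hy ⊢
      intro m
      obtain ⟨n, hmn, a, haA, hay⟩ := hy m
      refine ⟨n + 1, hmn.trans (Nat.le_succ n), a, haA, ?_⟩
      rw [Function.iterate_succ_apply', hay]
    · intro y hy
      by_cases hyx : y = x
      · exact ⟨x, hxLs, hyx ▸ hfx⟩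
      set K : Set T := f ⁻¹' {y} with hK
      have hKclosed : IsClosed K := isClosed_singleton.preimage hf
      set N : Set ℕ := {n | 1 ≤ n ∧ y ∈ f^[n] '' A} with hN
      have hNinf : N.Infinite := by
        apply Set.infinite_of_not_bddAbove
        rintro ⟨ub, hub⟩
        obtain ⟨n, hmn, hyn⟩ := mem_Ls_iff.1 hy (ub + 1)
        have : n ≤ ub := hub ⟨by omega, hyn⟩
        omega
      -- for each n ∈ N, a "first hit" preimage point of y on the arc towards it
      have hzw : ∀ n ∈ N, ∃ w, (w ∈ K ∧ ∀ q ∈ treeArc hT x w, q ∈ K → q = w) ∧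
          w ∈ f^[n - 1] '' A := by
        rintro n ⟨hn1, hyn⟩
        obtain ⟨a, haA, hay⟩ := hyn
        have hn' : n - 1 + 1 = n := by omega
        have hzK : f^[n-1] a ∈ K := by
          simp only [hK, Set.mem_preimage, Set.mem_singleton_iff]
          calc f (f^[n-1] a) = f^[(n-1)+1] a := (Function.iterate_succ_apply' f (n-1) a).symm
            _ = f^[n] a := by rw [hn']
            _ = y := hay
        obtain ⟨w, hwK, hwarc, hwmin⟩ := exists_first_hit hT hKclosed hzK (x := x)
        refine ⟨w, ⟨hwK, hwmin⟩, ?_⟩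
        exact harc_sub _ (n-1) ⟨a, haA, rfl⟩ hwarc
      choose w hwW hwA using hzw
      set W : Set T := {w | w ∈ K ∧ ∀ q ∈ treeArc hT x w, q ∈ K → q = w} with hW
      have hWfin : W.Finite := firstHit_finite hT x K
      set g : ℕ → T := fun n => if h : n ∈ N then w n h else x with hg
      have hgW : ∀ n (hn : n ∈ N), g n ∈ W := by
        intro n hn
        simp only [hg, dif_pos hn]
        exact hwW n hn
      have hfib : ∃ v ∈ W, {n ∈ N | g n = v}.Infinite := by
        by_contra hcon
        push_neg at hcon
        apply hNinf
        have : N ⊆ ⋃ v ∈ W, {n ∈ N | g n = v} := by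
          intro n hn
          exact Set.mem_biUnion (hgW n hn) ⟨hn, rfl⟩
        refine Set.Finite.subset (hWfin.biUnion ?_) this
        intro v hv
        exact hcon v hv
      obtain ⟨v, hvW, hvinf⟩ := hfib
      have hvLs : v ∈ Ls f A := by
        rw [mem_Ls_iff]
        intro m
        obtain ⟨n, hnfib, hmn⟩ : ∃ n ∈ {n ∈ N | g n = v}, m + 1 ≤ n := by
          by_contra hcon
          push_neg at hcon
          exact hvinf (Set.Finite.subset (Set.finite_Iio (m+1)) (fun n hn => hcon n hn))
        obtain ⟨hnN, hgn⟩ := hnfib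
        refine ⟨n - 1, by omega, ?_⟩
        have : w n hnN ∈ f^[n-1] '' A := hwA n hnN
        rwa [show w n hnN = v from by rw [← hgn]; simp only [hg, dif_pos hnN]] at this
      exact ⟨v, hvLs, hvW.1⟩
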